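/- arXiv:2209.04489 — 2 statements merged into one kernel-verified Lean document; each statement's English description precedes it below -/
import Mathlib

section
/- Every valuation domain that is not a field and is radically finite is a discrete valuation ring. -/
/-- The height of an ideal `I`: the infimum of the heights (in the prime spectrum)
of the prime ideals containing `I`. -/
noncomputable def idealHeight (R : Type*) [CommRing R] (I : Ideal R) : ℕ∞ :=
  ⨅ P : {P : PrimeSpectrum R // I ≤ P.asIdeal}, Order.height P.1

/-- An ideal `I` is radically perfect if its height equals the least number `n` such that
`√I` is the radical of an ideal generated by `n` elements, and moreover, if `ht I = 0`,
then `√I` is the radical of a principal ideal generated by a zero divisor. -/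
def RadicallyPerfect {R : Type*} [CommRing R] (I : Ideal R) : Prop :=
  idealHeight R I = sInf {n : ℕ∞ | ∃ s : Finset R,
      (s.card : ℕ∞) = n ∧ (Ideal.span (s : Set R)).radical = I.radical} ∧
    (idealHeight R I = 0 → ∃ θ : R, θ ∉ nonZeroDivisors R ∧
      I.radical = (Ideal.span {θ} : Ideal R).radical)

/-- The set of ideals of `R` generated by `ht P` elements whose radical equals `P`. -/
def genHtRad {R : Type*} [CommRing R] (P : Ideal R) : Set (Ideal R) :=
  {A | ∃ s : Finset R, (s.card : ℕ∞) = idealHeight R P ∧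
    Ideal.span (s : Set R) = A ∧ A.radical = P}

/-- A commutative ring `R` is radically finite if every prime ideal `P` of `R` is radically
perfect, the set of ideals generated by `ht P` elements with radical `P` has a maximal
member `A`, and every chain of ideals between `A` and `P` is finite. -/
def RadicallyFinite (R : Type*) [CommRing R] : Prop :=
  ∀ P : Ideal R, P.IsPrime → RadicallyPerfect P ∧
    ∃ A ∈ genHtRad P, (∀ B ∈ genHtRad P, A ≤ B → B = A) ∧
      ∀ C : Set (Ideal R), IsChain (· ≤ ·) C → C ⊆ Set.Icc A P → C.Finite

/-- A ring is of finite character if each nonzero element lies in only finitely many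
maximal ideals. -/
def FiniteCharacter (R : Type*) [CommRing R] : Prop :=
  ∀ x : R, x ≠ 0 → {M : Ideal R | M.IsMaximal ∧ x ∈ M}.Finite

/-! In a valuation domain the ideals are totally ordered, so for a prime `P` the chain condition
of radical finiteness makes the whole interval `[A, P]` finite, with `A` finitely generated.
A maximal finitely generated ideal in that interval can only be `P`, so every prime ideal is
finitely generated, `R` is noetherian by Cohen's theorem, and a noetherian valuation domain that
is not a field is a discrete valuation ring. -/

theorem Submodule.fg_of_fg_of_finite_Icc {R M : Type*} [Semiring R] [AddCommMonoid M]
    [Module R M] {N P : Submodule R M} (hN : N.FG) (hNP : N ≤ P)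
    (hfin : (Set.Icc N P).Finite) : P.FG := by
  have hfin' : {B | B ∈ Set.Icc N P ∧ B.FG}.Finite := hfin.subset fun _ h ↦ h.1
  obtain ⟨B, ⟨⟨hNB, hBP⟩, hB⟩, hmax⟩ := hfin'.exists_maximal ⟨N, ⟨le_rfl, hNP⟩, hN⟩
  suffices hPB : P ≤ B from le_antisymm hBP hPB ▸ hB
  intro x hx
  have hxB : B ⊔ span R {x} ≤ B :=
    hmax ⟨⟨hNB.trans le_sup_left, sup_le hBP ((span_singleton_le_iff_mem _ _).mpr hx)⟩,
      hB.sup (fg_span_singleton x)⟩ le_sup_left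
  exact hxB (mem_sup_right (mem_span_singleton_self x))

theorem RadicallyFinite.fg_of_isPrime {R : Type*} [CommRing R] [Nontrivial R]
    [PreValuationRing R] (hR : RadicallyFinite R) {P : Ideal R} (hP : P.IsPrime) : P.FG := by
  obtain ⟨-, A, ⟨s, -, rfl, hrad⟩, -, hchain⟩ := hR P hP
  exact Submodule.fg_of_fg_of_finite_Icc ⟨s, rfl⟩ (hrad ▸ Ideal.le_radical)
    (hchain _ (isChain_of_trichotomous _) subset_rfl)

/-- Every valuation domain that is not a field and is radically finite is a DVR. -/
theorem radicallyFinite_valuationRing_dvr {R : Type*} [CommRing R] [IsDomain R]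
    [ValuationRing R] (hnf : ¬ IsField R) (hR : RadicallyFinite R) :
    IsDiscreteValuationRing R := by
  have : IsNoetherianRing R := IsNoetherianRing.of_prime fun _ ↦ hR.fg_of_isPrime
  exact (IsDiscreteValuationRing.TFAE R hnf).out 1 0 |>.mp ‹ValuationRing R›
end

section
/- Let R be a unique factorization domain of finite character with Krull dimension 2. Then every prime ideal of R is radically perfect. -/
/-!
In a UFD every nonzero prime ideal contains a prime element `q`, and `(q)` is minimal among
nonzero primes. Hence height-one primes are principal, and a prime of height two is never the
radical of a principal ideal `(θ)`, since it would lie in `(f)` for a prime factor `f` of `θ`.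
For a prime `P` of height two pick a prime `q ∈ P`. By finite character only finitely many
maximal ideals contain `q`, so prime avoidance yields `b ∈ P` outside `(q)` and outside every
other maximal ideal containing `q`. In dimension two a prime containing `q` is either `(q)` or
maximal, so `P` is the only prime containing `q` and `b`, i.e. `√(q, b) = P`.
-/

theorem idealHeight_eq_height {R : Type*} [CommRing R] (I : Ideal R) :
    idealHeight R I = I.height := by
  rw [Ideal.height_eq_inf_minimalPrimes]
  apply le_antisymm
  · refine le_iInf₂ fun J hJ => ?_
    let Jp : PrimeSpectrum R := ⟨J, hJ.isPrime⟩
    calc idealHeight R I ≤ Order.height Jp :=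
          iInf_le (fun Q : {Q : PrimeSpectrum R // I ≤ Q.asIdeal} => Order.height Q.1)
            ⟨Jp, hJ.le⟩
      _ = J.height := (PrimeSpectrum.height_eq_orderHeight Jp).symm
  · refine le_iInf fun Q => ?_
    obtain ⟨J, hJ, hJQ⟩ := Ideal.exists_minimalPrimes_le Q.2
    calc ⨅ J ∈ I.minimalPrimes, J.height ≤ J.height := iInf₂_le J hJ
      _ ≤ Q.1.asIdeal.height := Ideal.height_mono hJQ
      _ = Order.height Q.1 := PrimeSpectrum.height_eq_orderHeight _

theorem radicallyPerfect_of_forall_height_le_card {R : Type*} [CommRing R] [Nontrivial R]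
    {I : Ideal R}
    (hgen : ∃ s : Finset R, (s.card : ℕ∞) = I.height ∧
      (Ideal.span (s : Set R)).radical = I.radical)
    (hle : ∀ s : Finset R, (Ideal.span (s : Set R)).radical = I.radical → I.height ≤ s.card) :
    RadicallyPerfect I := by
  rw [RadicallyPerfect, idealHeight_eq_height]
  refine ⟨le_antisymm (le_sInf ?_) (sInf_le hgen),
    fun h0 => ⟨0, zero_notMem_nonZeroDivisors, ?_⟩⟩
  · rintro n ⟨s, rfl, hs⟩
    exact hle s hs
  · obtain ⟨s, hcard, hs⟩ := hgen
    rw [h0, Nat.cast_eq_zero, Finset.card_eq_zero] at hcard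
    simp [← hs, hcard]

theorem Ideal.exists_mem_forall_notMem_of_finite {R : Type*} [CommRing R] {I : Ideal R}
    {S : Set (Ideal R)} (hS : S.Finite) (hprime : ∀ J ∈ S, J.IsPrime)
    (hI : ∀ J ∈ S, ¬ I ≤ J) : ∃ b ∈ I, ∀ J ∈ S, b ∉ J := by
  by_contra! h
  obtain ⟨J, hJS, hIJ⟩ := (Ideal.subset_union_prime_finite hS (f := id) ⊥ ⊥
    fun J hJ _ _ => hprime J hJ).mp fun b hb => by simpa using h b hb
  exact hI J hJS hIJ

theorem Ideal.isMaximal_of_height_eq_of_ringKrullDim_le {R : Type*} [CommRing R] {n : ℕ}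
    (hdim : ringKrullDim R ≤ n) {P : Ideal R} [P.IsPrime] (hP : P.height = n) :
    P.IsMaximal := by
  obtain ⟨M, hM, hPM⟩ := P.exists_le_maximal Ideal.IsPrime.ne_top'
  obtain rfl | hlt := hPM.eq_or_lt
  · exact hM
  have : P.FiniteHeight := P.finiteHeight_iff.mpr (Or.inr (by simp [hP]))
  have hM_height : M.height ≤ n := by
    exact_mod_cast (M.height_le_ringKrullDim_of_ne_top hM.ne_top).trans hdim
  have hPM_height := Ideal.height_strict_mono_of_isPrime hlt
  rw [hP] at hPM_height
  exact absurd hM_height (not_le.mpr hPM_height)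

theorem Ideal.height_eq_zero_or_one_or_two {R : Type*} [CommRing R]
    (hdim : ringKrullDim R ≤ 2) (P : Ideal R) [P.IsPrime] :
    P.height = 0 ∨ P.height = 1 ∨ P.height = 2 := by
  have hP2 : P.height ≤ 2 :=
    WithBot.coe_le_coe.mp (P.height_le_ringKrullDim_of_isPrime.trans hdim)
  generalize P.height = h at hP2 ⊢
  cases h with
  | top => simp at hP2
  | coe n =>
    norm_cast at hP2 ⊢
    omega

theorem Ideal.eq_span_singleton_or_isMaximal_of_mem {R : Type*} [CommRing R] [IsDomain R]
    (hdim : ringKrullDim R ≤ 2) {q : R} (hq : Prime q) {J : Ideal R} [J.IsPrime] (hqJ : q ∈ J) :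
    J = Ideal.span {q} ∨ J.IsMaximal := by
  obtain h0 | h1 | h2 := J.height_eq_zero_or_one_or_two hdim
  · rw [Ideal.height_eq_zero_iff_eq_bot] at h0
    exact absurd (h0 ▸ hqJ) (by simpa using hq.ne_zero)
  · exact Or.inl (J.eq_span_singleton_of_height_eq_one h1 hqJ hq)
  · exact Or.inr (Ideal.isMaximal_of_height_eq_of_ringKrullDim_le (n := 2) hdim h2)

section UniqueFactorization

variable {R : Type*} [CommRing R] [IsDomain R] [UniqueFactorizationMonoid R]

theorem Ideal.eq_span_singleton_of_le_of_ne_bot {q : R} (hq : Prime q) {Q : Ideal R}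
    [hQ : Q.IsPrime] (hQq : Q ≤ Ideal.span {q}) (hQ_bot : Q ≠ ⊥) : Q = Ideal.span {q} := by
  obtain ⟨p, hpQ, hp⟩ := hQ.exists_mem_prime_of_ne_bot hQ_bot
  obtain ⟨c, rfl⟩ := Ideal.mem_span_singleton.mp (hQq hpQ)
  have hc : IsUnit c := (hp.irreducible.isUnit_or_isUnit rfl).resolve_left hq.not_isUnit
  refine le_antisymm hQq ((Ideal.span_singleton_le_iff_mem Q).mpr ?_)
  exact (Ideal.mul_unit_mem_iff_mem Q hc).mp hpQ

theorem Ideal.height_span_singleton_le_one_of_prime {q : R} (hq : Prime q) :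
    (Ideal.span {q}).height ≤ 1 := by
  have : (Ideal.span {q}).IsPrime := (Ideal.span_singleton_prime hq.ne_zero).mpr hq
  refine Ideal.height_le_iff.mpr fun Q hQ hQq => ?_
  obtain rfl : Q = ⊥ := by
    by_contra hQ_bot
    exact hQq.ne (Ideal.eq_span_singleton_of_le_of_ne_bot hq hQq.le hQ_bot)
  simp

theorem Ideal.height_le_one_of_radical_span_singleton_eq {P : Ideal R} [hP : P.IsPrime] {θ : R}
    (hθ : (Ideal.span {θ}).radical = P) : P.height ≤ 1 := by
  by_cases hθ0 : θ = 0
  · subst hθ0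
    simp [← hθ]
  have hθu : ¬ IsUnit θ := fun hu => hP.ne_top (by simp [← hθ, hu])
  obtain ⟨f, hf, hfθ⟩ := WfDvdMonoid.exists_irreducible_factor hθu hθ0
  have hfp : Prime f := UniqueFactorizationMonoid.irreducible_iff_prime.mp hf
  have hPf : P ≤ Ideal.span {f} := by
    rw [← hθ, ((Ideal.span_singleton_prime hfp.ne_zero).mpr hfp).radical_le_iff]
    exact Ideal.span_singleton_le_span_singleton.mpr hfθ
  exact (Ideal.height_mono hPf).trans (Ideal.height_span_singleton_le_one_of_prime hfp)

theorem Ideal.height_le_card_of_radical_span_eq (hdim : ringKrullDim R ≤ 2) {P : Ideal R}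
    [P.IsPrime] (s : Finset R) (hs : (Ideal.span (s : Set R)).radical = P) :
    P.height ≤ s.card := by
  have hP2 : P.height ≤ 2 :=
    WithBot.coe_le_coe.mp (P.height_le_ringKrullDim_of_isPrime.trans hdim)
  obtain hcard | hcard | hcard : s.card = 0 ∨ s.card = 1 ∨ 2 ≤ s.card := by omega
  · rw [Finset.card_eq_zero] at hcard
    simp [← hs, hcard]
  · obtain ⟨θ, rfl⟩ := Finset.card_eq_one.mp hcard
    simpa using Ideal.height_le_one_of_radical_span_singleton_eq (by simpa using hs)
  · exact hP2.trans (by exact_mod_cast hcard)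

theorem Ideal.exists_radical_span_pair_eq (hfc : FiniteCharacter R) (hdim : ringKrullDim R ≤ 2)
    {P : Ideal R} [hP : P.IsPrime] (hP2 : P.height = 2) :
    ∃ q b : R, q ≠ b ∧ (Ideal.span {q, b}).radical = P := by
  have hP_max : P.IsMaximal := Ideal.isMaximal_of_height_eq_of_ringKrullDim_le (n := 2) hdim hP2
  obtain ⟨q, hqP, hq⟩ := hP.exists_mem_prime_of_ne_bot (by rintro rfl; simp at hP2)
  have hPq : ¬ P ≤ Ideal.span {q} := fun h => by
    have := (Ideal.height_mono h).trans (Ideal.height_span_singleton_le_one_of_prime hq)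
    simp [hP2] at this
  let S : Set (Ideal R) := insert (Ideal.span {q}) {M | M.IsMaximal ∧ q ∈ M ∧ M ≠ P}
  have hS : S.Finite := ((hfc q hq.ne_zero).subset fun M hM => ⟨hM.1, hM.2.1⟩).insert _
  obtain ⟨b, hbP, hbS⟩ := Ideal.exists_mem_forall_notMem_of_finite hS
    (by
      rintro J (rfl | ⟨hJ, -, -⟩)
      exacts [(Ideal.span_singleton_prime hq.ne_zero).mpr hq, hJ.isPrime])
    (by
      rintro J (rfl | ⟨hJ, -, hJP⟩) hPJ
      exacts [hPq hPJ, hJP (hP_max.eq_of_le hJ.ne_top hPJ).symm])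
  have hbq : b ∉ Ideal.span {q} := hbS _ (Set.mem_insert _ _)
  refine ⟨q, b, fun hqb => hbq (hqb ▸ Ideal.mem_span_singleton_self q), le_antisymm ?_ ?_⟩
  · rw [hP.radical_le_iff, Ideal.span_le, Set.insert_subset_iff, Set.singleton_subset_iff]
    exact ⟨hqP, hbP⟩
  · rw [Ideal.radical_eq_sInf]
    refine le_sInf ?_
    rintro J ⟨hqbJ, hJ⟩
    rw [Ideal.span_le, Set.insert_subset_iff, Set.singleton_subset_iff] at hqbJ
    obtain ⟨hqJ, hbJ⟩ := hqbJ
    rcases Ideal.eq_span_singleton_or_isMaximal_of_mem hdim hq hqJ with rfl | hJ_max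
    · exact absurd hbJ hbq
    · by_contra hPJ
      exact hbS J (Set.mem_insert_of_mem _ ⟨hJ_max, hqJ, fun h => hPJ h.ge⟩) hbJ

theorem Ideal.exists_finset_card_eq_height_radical_span_eq (hfc : FiniteCharacter R)
    (hdim : ringKrullDim R ≤ 2) (P : Ideal R) [hP : P.IsPrime] :
    ∃ s : Finset R, (s.card : ℕ∞) = P.height ∧ (Ideal.span (s : Set R)).radical = P := by
  classical
  obtain h0 | h1 | h2 := P.height_eq_zero_or_one_or_two hdim
  · rw [Ideal.height_eq_zero_iff_eq_bot] at h0
    exact ⟨∅, by simp [h0], by simp [h0]⟩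
  · obtain ⟨q, hqP, hq⟩ := hP.exists_mem_prime_of_ne_bot (P.ne_bot_of_height_eq_one h1)
    refine ⟨{q}, by simp [h1], ?_⟩
    rw [Finset.coe_singleton, ← P.eq_span_singleton_of_height_eq_one h1 hqP hq, hP.radical]
  · obtain ⟨q, b, hqb, hqbP⟩ := Ideal.exists_radical_span_pair_eq hfc hdim h2
    exact ⟨{q, b}, by simp [Finset.card_pair hqb, h2], by simpa using hqbP⟩

end UniqueFactorization

/-- Every prime ideal of a UFD of finite character with Krull dimension 2 is
radically perfect. -/
theorem ufd_finiteCharacter_dim_two_radicallyPerfect {R : Type*} [CommRing R]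
    [IsDomain R] [UniqueFactorizationMonoid R] (hfc : FiniteCharacter R)
    (hdim : ringKrullDim R = 2) (P : Ideal R) (hP : P.IsPrime) :
    RadicallyPerfect P := by
  refine radicallyPerfect_of_forall_height_le_card ?_ fun s hs => ?_
  · simpa only [hP.radical] using P.exists_finset_card_eq_height_radical_span_eq hfc hdim.le
  · exact P.height_le_card_of_radical_span_eq hdim.le s (hs.trans hP.radical)
end
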